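/- arXiv:1210.2284 — 5 statements merged into one kernel-verified Lean document; each statement's English description precedes it below -/
import Mathlib

section
/- Suppose F : [a,∞) → ℝ with a > 0, and F(x)/x is boundedly decreasing with ν̄(F(x)/x; e) ≤ C. Then for all y ≥ a, F(y) ≥ -M·y·(1 + log y - log a), where M = C + max(0, -F(a))/a. -/
/-! If `g` drops by at most `C` over every interval `[x, l x]`, then `[a, y]` is covered by a chain
of `⌈log_l (y / a)⌉` such intervals, so `g y ≥ g a - C (1 + log_l (y / a))`. Applied to
`g x = F x / x` with `l = e`, and bounding `F a / a` below by `-max 0 (-F a) / a`, this gives the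
estimate after multiplying by `y`. -/

open Real

section ChainBound

variable {g : ℝ → ℝ} {a C l : ℝ}

theorem sub_nat_mul_le_of_le_mul_pow (ha : 0 ≤ a) (hl : 1 ≤ l)
    (h : ∀ x y, a ≤ x → x ≤ y → y ≤ l * x → g x - C ≤ g y) (n : ℕ) {y : ℝ}
    (hay : a ≤ y) (hy : y ≤ a * l ^ n) : g a - n * C ≤ g y := by
  induction n generalizing y with
  | zero =>
    obtain rfl : y = a := le_antisymm (by simpa using hy) hay
    simp
  | succ n ih =>
    have hl0 : 0 < l := one_pos.trans_le hl
    set x := max a (y / l)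
    have hax : a ≤ x := le_max_left _ _
    have hxy : x ≤ y := max_le hay (div_le_self (ha.trans hay) hl)
    have hyx : y ≤ l * x := by
      rw [← div_le_iff₀' hl0]
      exact le_max_right _ _
    have hxn : x ≤ a * l ^ n := by
      refine max_le (le_mul_of_one_le_right ha (one_le_pow₀ hl)) ?_
      rw [div_le_iff₀ hl0, mul_assoc, ← pow_succ]
      exact hy
    have := ih hax hxn
    have := h x y hax hxy hyx
    push_cast
    linarith

theorem sub_mul_one_add_logb_le (ha : 0 < a) (hl : 1 < l) (hC : 0 ≤ C)
    (h : ∀ x y, a ≤ x → x ≤ y → y ≤ l * x → g x - C ≤ g y) {y : ℝ} (hay : a ≤ y) :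
    g a - C * (1 + logb l (y / a)) ≤ g y := by
  have hya : 0 < y / a := div_pos (ha.trans_le hay) ha
  set n := ⌈logb l (y / a)⌉₊
  have hy : y ≤ a * l ^ n := by
    rw [← div_le_iff₀' ha, ← rpow_natCast, ← logb_le_iff_le_rpow hl hya]
    exact Nat.le_ceil _
  have hn : (n : ℝ) ≤ 1 + logb l (y / a) := by
    have := Nat.ceil_lt_add_one (logb_nonneg hl ((one_le_div ha).mpr hay))
    linarith
  have := sub_nat_mul_le_of_le_mul_pow ha.le hl.le h n hay hy
  linarith [mul_le_mul_of_nonneg_left hn hC]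

end ChainBound

theorem lower_bound_of_boundedly_decreasing_quotient (a C : ℝ) (ha : 0 < a)
    (F : ℝ → ℝ)
    (h : ∀ x y : ℝ, a ≤ x → x ≤ y → y ≤ Real.exp 1 * x →
        F y / y - F x / x ≥ -C) :
    ∀ y : ℝ, a ≤ y →
      F y ≥ -(C + max 0 (-F a) / a) * y * (1 + Real.log y - Real.log a) := by
  intro y hay
  have hy : 0 < y := ha.trans_le hay
  have hC : 0 ≤ C := by
    have := h a a le_rfl le_rfl (le_mul_of_one_le_left ha.le (one_le_exp zero_le_one))
    linarith
  set m := max 0 (-F a) / a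
  have hm : 0 ≤ m := div_nonneg (le_max_left _ _) ha.le
  have hFa : -m ≤ F a / a := by
    rw [neg_le, ← neg_div]
    exact div_le_div_of_nonneg_right (le_max_right _ _) ha.le
  have hL : 0 ≤ log (y / a) := log_nonneg ((one_le_div ha).mpr hay)
  have hchain := sub_mul_one_add_logb_le (g := fun x => F x / x) ha
    (one_lt_exp_iff.mpr one_pos) hC (fun x y hax hxy hyx => by linarith [h x y hax hxy hyx]) hay
  rw [logb, log_exp, div_one] at hchain
  have hq : -(C + m) * (1 + log (y / a)) ≤ F y / y := by
    linarith [mul_nonneg hm hL]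
  rw [ge_iff_le, add_sub_assoc, ← log_div hy.ne' ha.ne', mul_right_comm, ← le_div_iff₀ hy]
  exact hq
end

section
/- Let ℓ : [a,∞) → (0,∞) be positive, nondecreasing, differentiable, with ℓ'/ℓ nonincreasing. If q : [a,∞) → ℝ is slowly decreasing and there is C > 0 with |q(x)| ≤ C·ℓ(x)²/(x·ℓ'(x)) for all x ≥ a, then q/ℓ is slowly decreasing on [a,∞). -/
/-! Split `q y / ℓ y - q x / ℓ x = (q y - q x) / ℓ y + q x * (1 / ℓ y - 1 / ℓ x)`. Since
`ℓ y ≥ ℓ a > 0`, the first term is controlled by the slow decrease of `q`. Since `ℓ'/ℓ` is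
nonincreasing, `log ℓ` is concave, which gives `1 / ℓ x - 1 / ℓ y ≤ (y - x) ℓ' x / ℓ x ^ 2`; the
growth bound on `q` turns the second term into at most `C (y / x - 1)`, which is small once
`y ≤ λ x` with `λ` close to `1`. -/

open Set

/-- `f` is slowly decreasing on `[a,∞)`:
`lim_{λ→1⁺} liminf_{x→∞} inf_{x ≤ y ≤ λx} (f(y) - f(x)) = 0`, expressed in ε-λ-X form. -/
def SlowlyDecreasingOn (f : ℝ → ℝ) (a : ℝ) : Prop :=
  ∀ ε : ℝ, 0 < ε → ∃ lam : ℝ, 1 < lam ∧ ∃ X : ℝ, a ≤ X ∧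
    ∀ x y : ℝ, X ≤ x → x ≤ y → y ≤ lam * x → f y - f x ≥ -ε

lemma HasDerivAt.nonneg_of_monotoneOn_Ici {f : ℝ → ℝ} {f' a x : ℝ} (hf : HasDerivAt f f' x)
    (hmono : MonotoneOn f (Ici a)) (hax : a ≤ x) : 0 ≤ f' := by
  refine hf.hasDerivWithinAt.nonneg_of_monotoneOn ?_ (hmono.mono (Ici_subset_Ici.2 hax))
  rw [accPt_principal_iff_nhdsWithin]
  exact (nhdsGT_neBot x).mono (nhdsWithin_mono x fun _ hy => ⟨mem_Ici.2 hy.le, hy.ne'⟩)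

lemma sub_le_mul_sub_of_antitoneOn_deriv {g g' : ℝ → ℝ} {x y : ℝ} (hxy : x ≤ y)
    (hg : ∀ t ∈ Icc x y, HasDerivAt g (g' t) t) (hanti : AntitoneOn g' (Icc x y)) :
    g y - g x ≤ g' x * (y - x) := by
  rcases hxy.eq_or_lt with rfl | hlt
  · simp
  obtain ⟨c, hc, hslope⟩ := exists_hasDerivAt_eq_slope g g' hlt
    (fun t ht => (hg t ht).continuousAt.continuousWithinAt)
    (fun t ht => hg t (Ioo_subset_Icc_self ht))
  have hcx : g' c ≤ g' x := hanti (left_mem_Icc.2 hxy) (Ioo_subset_Icc_self hc) hc.1.le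
  rwa [hslope, div_le_iff₀ (sub_pos.2 hlt)] at hcx

lemma inv_sub_inv_le_of_antitoneOn_logDeriv {f f' : ℝ → ℝ} {x y : ℝ} (hxy : x ≤ y)
    (hpos : ∀ t ∈ Icc x y, 0 < f t) (hf : ∀ t ∈ Icc x y, HasDerivAt f (f' t) t)
    (hanti : AntitoneOn (fun t => f' t / f t) (Icc x y)) :
    (f x)⁻¹ - (f y)⁻¹ ≤ (y - x) * f' x / f x ^ 2 := by
  have hx := hpos x (left_mem_Icc.2 hxy)
  have hy := hpos y (right_mem_Icc.2 hxy)
  have hlog : Real.log (f y) - Real.log (f x) ≤ f' x / f x * (y - x) :=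
    sub_le_mul_sub_of_antitoneOn_deriv (g := fun t => Real.log (f t)) hxy
      (fun t ht => (hf t ht).log (hpos t ht).ne') hanti
  have hratio : 1 - f x / f y ≤ Real.log (f y) - Real.log (f x) := by
    have := Real.one_sub_inv_le_log_of_pos (div_pos hy hx)
    rwa [inv_div, Real.log_div hy.ne' hx.ne'] at this
  calc (f x)⁻¹ - (f y)⁻¹ = (1 - f x / f y) / f x := by field_simp
    _ ≤ f' x / f x * (y - x) / f x := by gcongr; linarith
    _ = (y - x) * f' x / f x ^ 2 := by ring

theorem SlowlyDecreasingOn.div {f g : ℝ → ℝ} {a K : ℝ} (hf : SlowlyDecreasingOn f a)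
    (ha : 0 < a) (hK : 0 < K) (hga : 0 < g a) (hg : MonotoneOn g (Ici a))
    (hvar : ∀ x y, a ≤ x → x ≤ y → |f x| * ((g x)⁻¹ - (g y)⁻¹) ≤ K * (y / x - 1)) :
    SlowlyDecreasingOn (fun x => f x / g x) a := by
  intro ε hε
  obtain ⟨lam, hlam, X, haX, hX⟩ := hf (ε * g a / 2) (by positivity)
  refine ⟨min lam (1 + ε / (2 * K)), lt_min hlam (by simp only [lt_add_iff_pos_right]; positivity),
    X, haX, fun x y hXx hxy hy => ?_⟩
  have hax : a ≤ x := haX.trans hXx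
  have hay : a ≤ y := hax.trans hxy
  have hx : 0 < x := ha.trans_le hax
  have hgx : 0 < g x := hga.trans_le (hg self_mem_Ici hax hax)
  have hgay : g a ≤ g y := hg self_mem_Ici hay hay
  have hgy : 0 < g y := hga.trans_le hgay
  have hyx : y / x ≤ min lam (1 + ε / (2 * K)) := by rwa [div_le_iff₀ hx]
  have hjump : -(ε / 2) ≤ (f y - f x) / g y := by
    have := hX x y hXx hxy (by rw [← div_le_iff₀ hx]; exact hyx.trans (min_le_left _ _))
    rw [le_div_iff₀ hgy]
    nlinarith
  have hdrift : -(ε / 2) ≤ f x * ((g y)⁻¹ - (g x)⁻¹) := by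
    have hgap : 0 ≤ (g x)⁻¹ - (g y)⁻¹ := sub_nonneg.2 (inv_anti₀ hgx (hg hax hay hxy))
    have hK' : K * (y / x - 1) ≤ ε / 2 := by
      have := hyx.trans (min_le_right _ _)
      calc K * (y / x - 1) ≤ K * (ε / (2 * K)) := by gcongr; linarith
        _ = ε / 2 := by field_simp
    have := mul_le_mul_of_nonneg_right (le_abs_self (f x)) hgap
    linarith [hvar x y hax hxy]
  have hsplit : f y / g y - f x / g x = (f y - f x) / g y + f x * ((g y)⁻¹ - (g x)⁻¹) := by
    field_simp
    ring
  change f y / g y - f x / g x ≥ -ε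
  linarith

theorem slowlyDecreasing_div_ell (a C : ℝ) (ha : 0 < a) (hC : 0 < C)
    (ℓ ℓ' q : ℝ → ℝ)
    (hpos : ∀ x, a ≤ x → 0 < ℓ x)
    (hmono : MonotoneOn ℓ (Ici a))
    (hderiv : ∀ x, a ≤ x → HasDerivAt ℓ (ℓ' x) x)
    (hanti : AntitoneOn (fun x => ℓ' x / ℓ x) (Ici a))
    (hq : ∀ x, a ≤ x → |q x| ≤ C * (ℓ x) ^ 2 / (x * ℓ' x))
    (hslow : SlowlyDecreasingOn q a) :
    SlowlyDecreasingOn (fun x => q x / ℓ x) a := by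
  refine hslow.div ha hC (hpos a le_rfl) hmono fun x y hax hxy => ?_
  have hx : 0 < x := ha.trans_le hax
  have hℓx : 0 < ℓ x := hpos x hax
  have hyx : 0 ≤ y / x - 1 := by rw [sub_nonneg, one_le_div hx]; exact hxy
  have hIcc : Icc x y ⊆ Ici a := fun t ht => hax.trans ht.1
  have hinv := inv_sub_inv_le_of_antitoneOn_logDeriv hxy (fun t ht => hpos t (hIcc ht))
    (fun t ht => hderiv t (hIcc ht)) (hanti.mono hIcc)
  have hqx : |q x| * (x * ℓ' x) ≤ C * ℓ x ^ 2 := mul_le_of_le_div₀ (by positivity)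
    (mul_nonneg hx.le ((hderiv x hax).nonneg_of_monotoneOn_Ici hmono hax)) (hq x hax)
  calc |q x| * ((ℓ x)⁻¹ - (ℓ y)⁻¹) ≤ |q x| * ((y - x) * ℓ' x / ℓ x ^ 2) := by gcongr
    _ = |q x| * (x * ℓ' x) / ℓ x ^ 2 * (y / x - 1) := by field_simp
    _ ≤ C * ℓ x ^ 2 / ℓ x ^ 2 * (y / x - 1) := by gcongr
    _ = C * (y / x - 1) := by field_simp
end

section
/- Let a ≥ 1, A ≥ max(a, e), m > 0, ℓ(x) = (log x)^m. If F : [a,∞) → ℝ is moderately decreasing and |F(x)| ≤ C·x·ℓ(x) for x ≥ A, then F(x)/(x·ℓ(x)) is slowly decreasing on [A,∞). -/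
/-!
Write `L x = x (log x)^m` and `f = F / L`. For `x ≤ y ≤ λ x`,
`f y - f x = (F y - F x) / L y + (F x / L x) (L x / L y - 1)`.
Moderate decrease bounds the first term below by `-(B₁ (λ - 1) + B₂ φ x)`, because `x ≤ L y`,
and the growth bound `|F x| ≤ C L x` bounds the second below by `-C (1 - 1 / (λ (1 + log λ)^m))`,
because `L y ≤ λ (1 + log λ)^m L x`. Both bounds are small once `λ` is close to `1` and `x` is
large.
-/

open Set Filter

/-- `F` is moderately decreasing on `[a,∞)`. -/
def ModeratelyDecreasingOn (F : ℝ → ℝ) (a : ℝ) : Prop :=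
  ∃ B₁ B₂ : ℝ, 0 < B₁ ∧ 0 < B₂ ∧ ∃ φ : ℝ → ℝ,
    AntitoneOn φ (Ici a) ∧
    (∀ x, a ≤ x → x ≤ max 1 a → φ x = 1) ∧
    Filter.Tendsto φ Filter.atTop (nhds 0) ∧
    (∀ u v : ℝ, a ≤ u → 0 ≤ v →
      F (u + v) - F u ≥ -B₁ * v - B₂ * max 1 u * φ u)

open Real

theorem ModeratelyDecreasingOn.exists_sub_ge {F : ℝ → ℝ} {a : ℝ} (hF : ModeratelyDecreasingOn F a) :
    ∃ B, 0 ≤ B ∧ ∀ η, 0 < η → ∃ X, ∀ x y, X ≤ x → x ≤ y → F y - F x ≥ -B * (y - x) - η * x := by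
  obtain ⟨B₁, B₂, hB₁, hB₂, φ, -, -, hφ, hF⟩ := hF
  refine ⟨B₁, hB₁.le, fun η hη => ?_⟩
  obtain ⟨X, hX⟩ := eventually_atTop.1 (hφ.eventually_lt_const (div_pos hη hB₂))
  refine ⟨max X (max 1 a), fun x y hx hxy => ?_⟩
  have hXx : X ≤ x := le_of_max_le_left hx
  have h1x : 1 ≤ x := (le_max_left 1 a).trans (le_of_max_le_right hx)
  have hax : a ≤ x := (le_max_right 1 a).trans (le_of_max_le_right hx)
  have hφx : B₂ * φ x < η := by
    have := mul_lt_mul_of_pos_left (hX x hXx) hB₂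
    rwa [mul_div_cancel₀ η hB₂.ne'] at this
  have key := hF x (y - x) hax (sub_nonneg.2 hxy)
  rw [add_sub_cancel, max_eq_right h1x] at key
  have hslope := mul_le_mul_of_nonneg_right hφx.le (by linarith : (0 : ℝ) ≤ x)
  linarith

theorem le_mul_log_rpow {x m : ℝ} (hm : 0 ≤ m) (hx : exp 1 ≤ x) : x ≤ x * log x ^ m := by
  have hx0 : 0 < x := (exp_pos 1).trans_le hx
  have h1 : 1 ≤ log x ^ m := one_le_rpow ((le_log_iff_exp_le hx0).2 hx) hm
  nlinarith

theorem mul_log_rpow_le_of_le {x y m : ℝ} (hm : 0 ≤ m) (hx : 1 ≤ x) (hxy : x ≤ y) :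
    x * log x ^ m ≤ y * log y ^ m :=
  mul_le_mul hxy (rpow_le_rpow (log_nonneg hx) (log_le_log (by linarith) hxy) hm)
    (rpow_nonneg (log_nonneg hx) m) (by linarith)

theorem mul_log_rpow_le_of_le_mul {x y lam m : ℝ} (hm : 0 ≤ m) (hx : exp 1 ≤ x) (hxy : x ≤ y)
    (hy : y ≤ lam * x) : y * log y ^ m ≤ lam * (1 + log lam) ^ m * (x * log x ^ m) := by
  have hx0 : 0 < x := (exp_pos 1).trans_le hx
  have hlogx : 1 ≤ log x := (le_log_iff_exp_le hx0).2 hx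
  have hlam : 1 ≤ lam := le_of_mul_le_mul_right (by linarith) hx0
  have hloglam : 0 ≤ log lam := log_nonneg hlam
  have hlogy0 : 0 ≤ log y := by linarith [log_le_log hx0 hxy]
  have hlogy : log y ≤ (1 + log lam) * log x := by
    have := log_le_log (by linarith) hy
    rw [log_mul (by linarith) hx0.ne'] at this
    nlinarith
  have hpow : log y ^ m ≤ (1 + log lam) ^ m * log x ^ m := by
    rw [← mul_rpow (by linarith) (by linarith)]
    exact rpow_le_rpow hlogy0 hlogy hm
  calc y * log y ^ m ≤ (lam * x) * ((1 + log lam) ^ m * log x ^ m) :=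
        mul_le_mul hy hpow (rpow_nonneg hlogy0 m) (by positivity)
    _ = lam * (1 + log lam) ^ m * (x * log x ^ m) := by ring

theorem div_sub_div_ge {u v p q r C K : ℝ} (hp : 0 < p) (hpq : p ≤ q) (hqr : q ≤ r * p)
    (hu : |u| ≤ C * p) (hvu : v - u ≥ -K * q) : v / q - u / p ≥ -K - C * (1 - r⁻¹) := by
  have hq : 0 < q := hp.trans_le hpq
  have hr : 0 < r := pos_of_mul_pos_left (hq.trans_le hqr) hp.le
  have hC : 0 ≤ C := nonneg_of_mul_nonneg_left ((abs_nonneg u).trans hu) hp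
  have hratio : r⁻¹ ≤ p / q := by
    rw [inv_le_iff_one_le_mul₀ hr, div_mul_eq_mul_div, one_le_div hq]; linarith
  have hsplit : v / q - u / p = (v - u) / q + u / p * (p / q - 1) := by
    field_simp; ring
  have hfirst : (v - u) / q ≥ -K := by rwa [ge_iff_le, le_div_iff₀ hq]
  have hgap : 0 ≤ 1 - p / q := by rw [sub_nonneg, div_le_one hq]; exact hpq
  have hsecond : u / p * (p / q - 1) ≥ -C * (1 - p / q) := by
    have hup : u / p ≤ C := (le_abs_self _).trans (by rwa [abs_div, abs_of_pos hp, div_le_iff₀ hp])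
    nlinarith [mul_nonneg (sub_nonneg.2 hup) hgap]
  have hgap_le : C * (1 - p / q) ≤ C * (1 - r⁻¹) := mul_le_mul_of_nonneg_left (by linarith) hC
  linarith

theorem exists_one_lt_slack (m B C : ℝ) {η : ℝ} (hη : 0 < η) :
    ∃ lam, 1 < lam ∧ B * (lam - 1) + C * (1 - (lam * (1 + log lam) ^ m)⁻¹) < η := by
  set g : ℝ → ℝ := fun t => B * (t - 1) + C * (1 - (t * (1 + log t) ^ m)⁻¹)
  have hcont : ContinuousAt g 1 := by
    have hbase : ContinuousAt (fun t => t * (1 + log t) ^ m) 1 :=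
      continuousAt_id.mul ((continuousAt_const.add (continuousAt_log one_ne_zero)).rpow_const
        (Or.inl (by simp)))
    exact (continuousAt_const.mul (continuousAt_id.sub continuousAt_const)).add
      (continuousAt_const.mul (continuousAt_const.sub (hbase.inv₀ (by simp))))
  have hg1 : g 1 = 0 := by simp [g]
  have hlim : Tendsto g (nhdsWithin 1 (Ioi 1)) (nhds 0) :=
    hg1 ▸ hcont.tendsto.mono_left nhdsWithin_le_nhds
  exact ((hlim.eventually_lt_const hη).and self_mem_nhdsWithin).exists.imp fun _ h => ⟨h.2, h.1⟩

theorem moderatelyDecreasing_implies_slowlyDecreasing_div_general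
    (a A m C : ℝ) (hA : Real.exp 1 ≤ A) (hm : 0 < m)
    (F : ℝ → ℝ) (hmod : ModeratelyDecreasingOn F a)
    (hbound : ∀ x, A ≤ x → |F x| ≤ C * (x * (Real.log x) ^ m)) :
    SlowlyDecreasingOn (fun x => F x / (x * (Real.log x) ^ m)) A := by
  intro ε hε
  obtain ⟨B, hB, hdec⟩ := hmod.exists_sub_ge
  obtain ⟨lam, hlam, hslack⟩ := exists_one_lt_slack m B C (half_pos hε)
  obtain ⟨X, hX⟩ := hdec (ε / 2) (half_pos hε)
  refine ⟨lam, hlam, max X A, le_max_right X A, fun x y hx hxy hy => ?_⟩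
  have hAx : A ≤ x := le_of_max_le_right hx
  have hex : exp 1 ≤ x := hA.trans hAx
  have hx0 : 0 < x := (exp_pos 1).trans_le hex
  have hxLx := le_mul_log_rpow hm.le hex
  have hLxy := mul_log_rpow_le_of_le hm.le ((one_le_exp zero_le_one).trans hex) hxy
  have hincr : F y - F x ≥ -(B * (lam - 1) + ε / 2) * (y * log y ^ m) := by
    have hyx : B * (y - x) ≤ B * ((lam - 1) * x) := mul_le_mul_of_nonneg_left (by linarith) hB
    have hK : 0 ≤ B * (lam - 1) + ε / 2 := add_nonneg (mul_nonneg hB (by linarith)) (by positivity)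
    have hxLy := mul_le_mul_of_nonneg_left (hxLx.trans hLxy) hK
    linarith [hX x y (le_of_max_le_left hx) hxy]
  have hquot := div_sub_div_ge (hx0.trans_le hxLx) hLxy
    (mul_log_rpow_le_of_le_mul hm.le hex hxy hy) (hbound x hAx) hincr
  dsimp only
  linarith

theorem moderatelyDecreasing_implies_slowlyDecreasing_div
    (a A m C : ℝ) (ha : 1 ≤ a) (haA : a ≤ A) (hA : Real.exp 1 ≤ A) (hm : 0 < m)
    (F : ℝ → ℝ) (hmod : ModeratelyDecreasingOn F a)
    (hbound : ∀ x, A ≤ x → |F x| ≤ C * (x * (Real.log x) ^ m)) :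
    SlowlyDecreasingOn (fun x => F x / (x * (Real.log x) ^ m)) A :=
  moderatelyDecreasing_implies_slowlyDecreasing_div_general a A m C hA hm F hmod hbound
end

section
/- There exists a function F : [1,∞) → ℝ with F(x) = O(x) and F(x)/x slowly decreasing, such that F is not moderately decreasing: for every constant C > 0 there exist sequences x_k → ∞ and y_k > 0 with F(x_k + y_k) - F(x_k) + C·y_k ≤ -c·x_k for some c > 0. -/
/-!
Let `f ≤ 0` vanish at every power `4ⁿ` and, on `[4ⁿ, 4ⁿ⁺¹)`, dip linearly down to about `-1/m`
with slope `4m` (in the variable `x / 4ⁿ`) and climb back slowly, where the block type `m`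
runs through every positive integer infinitely often. Over `y ∈ [x, (1 + δ) x]` the function `f`
drops by at most `min (16 m δ) (1/m) ≤ 4 √δ`, so `f` is slowly decreasing. But `F x = x f x`
drops by about `x / (2m)` over a stretch of length `x / (8m²)` right after `4ⁿ`, which no
bound `-B₁ v - o(x)` can absorb once `m ≥ B₁`.
-/

open Set Filter

theorem SlowlyDecreasingOn.congr {f g : ℝ → ℝ} {a : ℝ} (hf : SlowlyDecreasingOn f a)
    (hfg : ∀ x, a ≤ x → f x = g x) : SlowlyDecreasingOn g a := by
  intro ε hε
  obtain ⟨lam, hlam, X, haX, hX⟩ := hf ε hε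
  refine ⟨lam, hlam, X, haX, fun x y hXx hxy hy => ?_⟩
  rw [← hfg x (by linarith), ← hfg y (by linarith)]
  exact hX x y hXx hxy hy

namespace SlowlyDecreasingCounterexample

section Tent

variable {m t t' : ℝ}

noncomputable def tent (m t : ℝ) : ℝ := max 0 (min (4 * m * (t - 1)) ((2 - t) / m))

theorem tent_nonneg : 0 ≤ tent m t := le_max_left _ _

theorem tent_le_inv (hm : 0 < m) (ht : 1 ≤ t) : tent m t ≤ 1 / m :=
  max_le (by positivity) ((min_le_right _ _).trans (by gcongr; linarith))

theorem tent_le_add (hm : 0 ≤ m) (htt' : t ≤ t') : tent m t' ≤ tent m t + 4 * m * (t' - t) := by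
  have hd : 0 ≤ 4 * m * (t' - t) := by nlinarith
  have hrise : 4 * m * (t' - 1) = 4 * m * (t - 1) + 4 * m * (t' - t) := by ring
  have hfall : (2 - t') / m ≤ (2 - t) / m + 4 * m * (t' - t) := by
    have : (2 - t') / m ≤ (2 - t) / m := by gcongr
    linarith
  calc tent m t' ≤ max 0 (min (4 * m * (t - 1)) ((2 - t) / m) + 4 * m * (t' - t)) := by
        refine max_le_max le_rfl ?_
        rw [← min_add_add_right, hrise]
        exact min_le_min le_rfl hfall
    _ ≤ tent m t + 4 * m * (t' - t) := max_le (by linarith [tent_nonneg (m := m) (t := t)])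
        (by linarith [show min (4 * m * (t - 1)) ((2 - t) / m) ≤ tent m t from le_max_right _ _])

theorem tent_one (m : ℝ) : tent m 1 = 0 := by
  simp [tent]

theorem tent_peak (hm : 1 ≤ 2 * m) : tent m (1 + 1 / (8 * m ^ 2)) = 1 / (2 * m) := by
  have hm0 : 0 < m := by linarith
  have hrise : 4 * m * (1 + 1 / (8 * m ^ 2) - 1) = 1 / (2 * m) := by field_simp; ring
  have hfall : 1 / (2 * m) ≤ (2 - (1 + 1 / (8 * m ^ 2))) / m := by
    have : 1 / (8 * m ^ 2) ≤ 1 / 2 := by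
      rw [div_le_div_iff₀ (by positivity) (by norm_num)]; nlinarith
    rw [div_le_div_iff₀ (by positivity) hm0]
    nlinarith
  rw [tent, hrise, min_eq_left hfall, max_eq_right (by positivity)]

theorem min_mul_sq_inv_le {ε : ℝ} (hm : 0 < m) (hε : 0 ≤ ε) : min (m * ε ^ 2) (1 / m) ≤ ε := by
  rcases le_or_gt (m * ε) 1 with h | h
  · exact (min_le_left _ _).trans (by nlinarith)
  · exact (min_le_right _ _).trans (by rw [div_le_iff₀ hm]; linarith)

end Tent

section Blocks

noncomputable def blockIndex (x : ℝ) : ℕ := Nat.log 4 ⌊x⌋₊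

def blockType (n : ℕ) : ℕ := n.unpair.1 + 1

variable {x : ℝ} {n : ℕ}

theorem pow_blockIndex_le (hx : 1 ≤ x) : (4 : ℝ) ^ blockIndex x ≤ x := by
  have hfloor : ⌊x⌋₊ ≠ 0 := Nat.one_le_iff_ne_zero.1 ((Nat.one_le_floor_iff x).2 hx)
  calc (4 : ℝ) ^ blockIndex x ≤ (⌊x⌋₊ : ℝ) := by exact_mod_cast Nat.pow_log_le_self 4 hfloor
    _ ≤ x := Nat.floor_le (by linarith)

theorem lt_pow_blockIndex_succ (x : ℝ) : x < (4 : ℝ) ^ (blockIndex x + 1) :=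
  calc x < ⌊x⌋₊ + 1 := Nat.lt_floor_add_one x
    _ ≤ (4 : ℝ) ^ (blockIndex x + 1) := by exact_mod_cast Nat.lt_pow_succ_log_self (by norm_num) _

theorem blockIndex_eq (h₁ : (4 : ℝ) ^ n ≤ x) (h₂ : x < (4 : ℝ) ^ (n + 1)) : blockIndex x = n :=
  Nat.log_eq_of_pow_le_of_lt_pow (Nat.le_floor (by exact_mod_cast h₁))
    ((Nat.floor_lt ((by positivity : (0 : ℝ) ≤ 4 ^ n).trans h₁)).2 (by exact_mod_cast h₂))

theorem one_le_blockType (n : ℕ) : (1 : ℝ) ≤ blockType n := by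
  exact_mod_cast Nat.succ_pos _

theorem blockType_pos (n : ℕ) : (0 : ℝ) < blockType n := one_pos.trans_le (one_le_blockType n)

theorem exists_blockType_eq {m : ℕ} (hm : 1 ≤ m) (N : ℕ) : ∃ n, N ≤ n ∧ blockType n = m :=
  ⟨Nat.pair (m - 1) N, Nat.right_le_pair _ _, by simp only [blockType, Nat.unpair_pair]; omega⟩

end Blocks

section Dips

/-- The `f` of the construction; the counterexample is `F x = x * dips x`. -/
noncomputable def dips (x : ℝ) : ℝ :=
  -tent (blockType (blockIndex x)) (x / 4 ^ blockIndex x)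

variable {x y : ℝ}

theorem dips_nonpos (x : ℝ) : dips x ≤ 0 := neg_nonpos.2 tent_nonneg

theorem neg_inv_blockType_le_dips (hx : 1 ≤ x) : -(1 / blockType (blockIndex x) : ℝ) ≤ dips x :=
  neg_le_neg (tent_le_inv (blockType_pos _) ((one_le_div (by positivity)).2 (pow_blockIndex_le hx)))

theorem abs_dips_le_one (hx : 1 ≤ x) : |dips x| ≤ 1 := by
  have h := neg_inv_blockType_le_dips hx
  have : (1 / blockType (blockIndex x) : ℝ) ≤ 1 := (div_le_one (blockType_pos _)).2 (one_le_blockType _)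
  rw [abs_le]
  constructor <;> linarith [dips_nonpos x]

/-- On the block of `y`, `dips` decreases with slope at most `4 m / 4ⁿ`; before that block it is
already `≤ 0`, and the block starts at `0`. -/
theorem dips_sub_ge (hx : 1 ≤ x) (hxy : x ≤ y) :
    -(4 * blockType (blockIndex y) * (y - x) / 4 ^ blockIndex y) ≤ dips y - dips x := by
  set n := blockIndex y
  set m : ℝ := (blockType n : ℝ)
  have hm : 0 ≤ m := (blockType_pos n).le
  have hP : (0 : ℝ) < 4 ^ n := by positivity
  have hslope (s : ℝ) : 4 * m * (y / 4 ^ n - s / 4 ^ n) = 4 * m * (y - s) / 4 ^ n := by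
    field_simp
  have hdy : dips y = -tent m (y / 4 ^ n) := rfl
  rcases le_or_gt ((4 : ℝ) ^ n) x with hnx | hxn
  · have hxn : blockIndex x = n := blockIndex_eq hnx (hxy.trans_lt (lt_pow_blockIndex_succ y))
    have := tent_le_add hm (div_le_div_of_nonneg_right hxy hP.le)
    have hdx : dips x = -tent m (x / 4 ^ n) := by rw [dips, hxn]
    rw [hdy, hdx, ← hslope x]
    linarith
  · have hstart := tent_le_add hm ((one_le_div hP).2 (pow_blockIndex_le (hx.trans hxy)))
    rw [tent_one, ← div_self hP.ne', hslope] at hstart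
    have : 4 * m * (y - 4 ^ n) / 4 ^ n ≤ 4 * m * (y - x) / 4 ^ n := by gcongr
    rw [hdy]
    linarith [dips_nonpos x]

theorem dips_sub_ge_of_le_mul {δ : ℝ} (hδ : 0 ≤ δ) (hx : 1 ≤ x) (hxy : x ≤ y)
    (hy : y ≤ (1 + δ) * x) :
    -min (16 * blockType (blockIndex y) * δ) (1 / blockType (blockIndex y)) ≤ dips y - dips x := by
  set n := blockIndex y
  set m : ℝ := (blockType n : ℝ)
  have hP : (0 : ℝ) < 4 ^ n := by positivity
  have hslope : 4 * m * (y - x) / 4 ^ n ≤ 16 * m * δ := by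
    have hy4 : y < 4 * 4 ^ n := by simpa [pow_succ, mul_comm] using lt_pow_blockIndex_succ y
    have hm : 0 ≤ m := (blockType_pos n).le
    rw [div_le_iff₀ hP]
    calc 4 * m * (y - x) ≤ 4 * m * (δ * (4 * 4 ^ n)) := by gcongr; nlinarith
      _ = 16 * m * δ * 4 ^ n := by ring
  rcases min_cases (16 * m * δ) (1 / m) with ⟨hmin, -⟩ | ⟨hmin, -⟩ <;> rw [hmin]
  · linarith [dips_sub_ge hx hxy]
  · linarith [dips_nonpos x, neg_inv_blockType_le_dips (hx.trans hxy)]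

theorem slowlyDecreasingOn_dips : SlowlyDecreasingOn dips 1 := by
  intro ε hε
  refine ⟨1 + ε ^ 2 / 16, lt_add_of_pos_right _ (by positivity), 1, le_rfl, fun x y hx hxy hy => ?_⟩
  have h := dips_sub_ge_of_le_mul (by positivity) hx hxy hy
  have := min_mul_sq_inv_le (blockType_pos (blockIndex y)) hε.le
  have hδ : 16 * (blockType (blockIndex y) : ℝ) * (ε ^ 2 / 16)
      = blockType (blockIndex y) * ε ^ 2 := by ring
  rw [hδ] at h
  linarith

theorem dips_pow (n : ℕ) : dips (4 ^ n) = 0 := by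
  have : blockIndex (4 ^ n) = n := blockIndex_eq le_rfl (by gcongr <;> norm_num)
  simp [dips, this, tent_one]

theorem dips_peak (n : ℕ) :
    dips (4 ^ n * (1 + 1 / (8 * (blockType n : ℝ) ^ 2))) = -(1 / (2 * blockType n)) := by
  set m : ℝ := (blockType n : ℝ)
  have hm : 1 ≤ m := one_le_blockType n
  have hs : 0 < 1 / (8 * m ^ 2) := by positivity
  have hs' : 1 / (8 * m ^ 2) < 3 := by
    rw [div_lt_iff₀ (by positivity)]; nlinarith
  have hP : (0 : ℝ) < 4 ^ n := by positivity
  have : blockIndex (4 ^ n * (1 + 1 / (8 * m ^ 2))) = n :=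
    blockIndex_eq (by nlinarith) (by have := pow_succ (4 : ℝ) n; nlinarith)
  rw [dips, this, mul_div_cancel_left₀ _ hP.ne', tent_peak (by linarith)]

theorem mul_dips_drop {C : ℝ} (n : ℕ) (hC : C ≤ blockType n) :
    let x : ℝ := 4 ^ n
    let y := x / (8 * (blockType n : ℝ) ^ 2)
    (x + y) * dips (x + y) - x * dips x + C * y ≤ -(1 / (4 * blockType n)) * x := by
  intro x y
  set m : ℝ := (blockType n : ℝ)
  have hm : 1 ≤ m := one_le_blockType n
  have hxy : x + y = 4 ^ n * (1 + 1 / (8 * m ^ 2)) := by simp only [x, y, m]; ring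
  have hpeak : dips (x + y) = -(1 / (2 * m)) := by rw [hxy]; exact dips_peak n
  have hstart : dips x = 0 := dips_pow n
  rw [hpeak, hstart]
  have hCy : C * y ≤ x / (4 * m) / 2 := by
    calc C * y ≤ m * y := by gcongr
      _ = x / (4 * m) / 2 := by simp only [y, m]; field_simp; ring
  have hdrop : x / (4 * m) * 2 ≤ (x + y) * (1 / (2 * m)) :=
    calc x / (4 * m) * 2 = x * (1 / (2 * m)) := by field_simp; norm_num
      _ ≤ (x + y) * (1 / (2 * m)) := by gcongr; linarith [show 0 ≤ y by positivity]
  have : (x + y) * -(1 / (2 * m)) = -((x + y) * (1 / (2 * m))) := by ring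
  have : -(1 / (4 * m)) * x = -(x / (4 * m)) := by ring
  linarith [show 0 ≤ x / (4 * m) by positivity]

end Dips

end SlowlyDecreasingCounterexample

open SlowlyDecreasingCounterexample in
theorem exists_slowlyDecreasing_div_not_moderatelyDecreasing :
    ∃ F : ℝ → ℝ,
      (∃ K : ℝ, ∀ x, 1 ≤ x → |F x| ≤ K * x) ∧
      SlowlyDecreasingOn (fun x => F x / x) 1 ∧
      (∀ C : ℝ, 0 < C → ∃ c : ℝ, 0 < c ∧
        ∀ N : ℝ, ∃ x : ℝ, N ≤ x ∧ 1 ≤ x ∧ ∃ y : ℝ, 0 < y ∧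
          F (x + y) - F x + C * y ≤ -c * x) := by
  refine ⟨fun x => x * dips x, ⟨1, fun x hx => ?_⟩, ?_, fun C hC => ?_⟩
  · rw [abs_mul, abs_of_nonneg (by linarith : 0 ≤ x), one_mul]
    exact mul_le_of_le_one_right (by linarith) (abs_dips_le_one hx)
  · exact slowlyDecreasingOn_dips.congr fun x hx => (mul_div_cancel_left₀ _ (by positivity)).symm
  · set m := ⌈C⌉₊
    have hm : 1 ≤ m := Nat.ceil_pos.2 hC
    refine ⟨1 / (4 * m), by positivity, fun N => ?_⟩
    obtain ⟨n, hNn, hn⟩ := exists_blockType_eq hm ⌈N⌉₊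
    have hCn : C ≤ blockType n := hn ▸ Nat.le_ceil C
    refine ⟨4 ^ n, ?_, one_le_pow₀ (by norm_num), _, by positivity, hn ▸ mul_dips_drop n hCn⟩
    calc N ≤ ⌈N⌉₊ := Nat.le_ceil N
      _ ≤ n := by exact_mod_cast hNn
      _ ≤ 4 ^ n := by exact_mod_cast (Nat.lt_pow_self (by norm_num)).le
end

section
/- For ω > -1 and all real t, the function β(ω,t) defined as t^ω·e^{-t}·(1-e^{-t})/Γ(ω+1) for t > 0 and 0 for t ≤ 0 satisfies |β(ω,t)| ≤ 1/√π. -/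
open Real

/-- The function β(ω,t). -/
noncomputable def betaFn (ω t : ℝ) : ℝ :=
  if 0 < t then t ^ ω * Real.exp (-t) * (1 - Real.exp (-t)) / Real.Gamma (ω + 1)
  else 0

/-!
Write `ξ = ω + 1`. Since `1 - e^{-t} ≤ min(t, 1)`, the numerator of `β(ω, t)` is at most
`t^ξ e^{-t} ≤ ξ^ξ e^{-ξ}` or `t^ω e^{-t} ≤ ω^ω e^{-ω}`. Stirling's lower bound
`Γ(x) ≥ √(2π) x^{x - 1/2} e^{-x}` for real `x > 0` turns the first into `√(ξ/2) / √π ≤ 1 / √π`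
when `ξ ≤ 2`, and, together with `Γ(ω + 1) = ω Γ(ω)`, the second into `1 / √(2πω) ≤ 1 / √π`
when `ω ≥ 1`.

Stirling's bound for real arguments follows from the one for factorials: the error
`log Γ(x) - ((x - 1/2) log x - x + log(2π)/2)` does not increase under `x ↦ x + 1`, and
log-convexity of `Γ` bounds `Γ(x + n + 1)` below by `n! n^x`, so along `x + n + 1` the error is
at least `-(x + 1/2)(x + 1)/n`.
-/

lemma two_div_two_mul_add_one_le_log_one_add_inv {a : ℝ} (ha : 0 < a) :
    2 / (2 * a + 1) ≤ log (1 + a⁻¹) := by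
  have h := le_hasSum (hasSum_log_one_add_inv ha) 0 fun k _ => by positivity
  simpa [div_eq_mul_inv] using h

noncomputable def stirlingError (x : ℝ) : ℝ :=
  log (Gamma x) - ((x - 1 / 2) * log x - x + log (2 * π) / 2)

lemma stirlingError_add_one_le {x : ℝ} (hx : 0 < x) :
    stirlingError (x + 1) ≤ stirlingError x := by
  have hlog : log (x + 1) = log x + log (1 + x⁻¹) := by
    rw [← log_mul hx.ne' (by positivity), mul_add, mul_inv_cancel₀ hx.ne', mul_one]
  have hstep : 1 ≤ (x + 1 / 2) * log (1 + x⁻¹) := by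
    calc (1 : ℝ) = (x + 1 / 2) * (2 / (2 * x + 1)) := by field_simp
      _ ≤ _ := by gcongr; exact two_div_two_mul_add_one_le_log_one_add_inv hx
  unfold stirlingError
  rw [Gamma_add_one hx.ne', log_mul hx.ne' (Gamma_pos_of_pos hx).ne', hlog]
  linarith

lemma stirlingError_add_nat_le {x : ℝ} (hx : 0 < x) (n : ℕ) :
    stirlingError (x + n) ≤ stirlingError x := by
  induction n with
  | zero => simp
  | succ n ih =>
    push_cast
    rw [← add_assoc]
    exact (stirlingError_add_one_le (by positivity)).trans ih

lemma neg_div_le_stirlingError_add_nat_add_one {x : ℝ} (hx : 0 < x) {m : ℕ} (hm : m ≠ 0) :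
    -((x + 1 / 2) * (x + 1) / m) ≤ stirlingError (x + (m + 1)) := by
  have hm' : (0 : ℝ) < m := by positivity
  have hconvex := Real.BohrMollerup.f_add_nat_ge convexOn_log_Gamma
    (fun {y} hy => by simp [Gamma_add_one hy.ne', log_mul hy.ne' (Gamma_pos_of_pos hy).ne', add_comm])
    (n := m + 1) (by omega) hx
  push_cast at hconvex
  simp only [Function.comp_apply, add_sub_cancel_right, Gamma_nat_eq_factorial] at hconvex
  rw [add_comm _ x] at hconvex
  have hfactorial := Stirling.le_log_factorial_stirling hm
  have hlog : log (x + (m + 1)) - log m ≤ (x + 1) / m := by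
    rw [← log_div (by positivity) hm'.ne']
    calc _ ≤ (x + (m + 1)) / m - 1 := log_le_sub_one_of_pos (by positivity)
      _ = (x + 1) / m := by field_simp; ring
  have hprod := mul_le_mul_of_nonneg_left hlog (by positivity : (0 : ℝ) ≤ m + x + 1 / 2)
  have hsplit : (m + x + 1 / 2) * ((x + 1) / m) = x + 1 + (x + 1 / 2) * (x + 1) / m := by
    field_simp; ring
  unfold stirlingError
  linarith

lemma stirlingError_nonneg {x : ℝ} (hx : 0 < x) : 0 ≤ stirlingError x := by
  have hlim : Filter.Tendsto (fun m : ℕ => -((x + 1 / 2) * (x + 1) / m)) Filter.atTop (nhds 0) := by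
    simpa using (tendsto_const_div_atTop_nhds_zero_nat ((x + 1 / 2) * (x + 1))).neg
  refine le_of_tendsto hlim (Filter.eventually_ne_atTop 0 |>.mono fun m hm => ?_)
  calc _ ≤ stirlingError (x + (m + 1)) := neg_div_le_stirlingError_add_nat_add_one hx hm
    _ ≤ stirlingError x := by exact_mod_cast stirlingError_add_nat_le hx (m + 1)

lemma sqrt_pi_mul_rpow_self_mul_exp_neg_le_sqrt_mul_Gamma {x : ℝ} (hx : 0 < x) :
    √π * x ^ x * exp (-x) ≤ √(x / 2) * Gamma x := by
  rw [← log_le_log_iff (by positivity) (by positivity), log_mul (by positivity) (by positivity),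
    log_mul (by positivity) (by positivity), log_mul (by positivity) (by positivity), log_exp,
    log_rpow hx, log_sqrt pi_pos.le, log_sqrt (by positivity), log_div hx.ne' two_ne_zero]
  have hstirling := stirlingError_nonneg hx
  unfold stirlingError at hstirling
  rw [log_mul two_ne_zero pi_pos.ne'] at hstirling
  linarith

lemma sqrt_pi_mul_rpow_self_mul_exp_neg_le_Gamma {x : ℝ} (hx : 0 < x) (hx2 : x ≤ 2) :
    √π * x ^ x * exp (-x) ≤ Gamma x := by
  have hsqrt : √(x / 2) ≤ 1 := sqrt_le_one.mpr (by linarith)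
  calc _ ≤ √(x / 2) * Gamma x := sqrt_pi_mul_rpow_self_mul_exp_neg_le_sqrt_mul_Gamma hx
    _ ≤ Gamma x := mul_le_of_le_one_left (Gamma_pos_of_pos hx).le hsqrt

lemma sqrt_pi_mul_rpow_self_mul_exp_neg_le_Gamma_add_one {x : ℝ} (hx : 1 / 2 ≤ x) :
    √π * x ^ x * exp (-x) ≤ Gamma (x + 1) := by
  have hx0 : 0 < x := by linarith
  have hsqrt : √(x / 2) ≤ x := (sqrt_le_left hx0.le).mpr (by nlinarith)
  calc _ ≤ √(x / 2) * Gamma x := sqrt_pi_mul_rpow_self_mul_exp_neg_le_sqrt_mul_Gamma hx0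
    _ ≤ x * Gamma x := by gcongr
    _ = Gamma (x + 1) := (Gamma_add_one hx0.ne').symm

lemma rpow_mul_exp_neg_le {a t : ℝ} (ha : 0 < a) (ht : 0 < t) :
    t ^ a * exp (-t) ≤ a ^ a * exp (-a) := by
  rw [rpow_def_of_pos ht, rpow_def_of_pos ha, ← exp_add, ← exp_add, exp_le_exp]
  have h := log_le_sub_one_of_pos (div_pos ht ha)
  rw [log_div ht.ne' ha.ne', le_sub_iff_add_le, le_div_iff₀ ha] at h
  linarith

lemma sqrt_pi_mul_rpow_mul_exp_neg_mul_one_sub_exp_neg_le_Gamma_add_one {ω t : ℝ}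
    (hω : -1 < ω) (ht : 0 < t) :
    √π * (t ^ ω * exp (-t) * (1 - exp (-t))) ≤ Gamma (ω + 1) := by
  rcases le_total ω 1 with hω1 | hω1
  · have hsub : 1 - exp (-t) ≤ t := by linarith [add_one_le_exp (-t)]
    calc √π * (t ^ ω * exp (-t) * (1 - exp (-t))) ≤ √π * (t ^ (ω + 1) * exp (-t)) := by
          rw [rpow_add_one ht.ne', mul_right_comm _ t]
          gcongr
      _ ≤ √π * ((ω + 1) ^ (ω + 1) * exp (-(ω + 1))) := by
          gcongr √π * ?_; exact rpow_mul_exp_neg_le (by linarith) ht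
      _ ≤ Gamma (ω + 1) := by
          rw [← mul_assoc]
          exact sqrt_pi_mul_rpow_self_mul_exp_neg_le_Gamma (by linarith) (by linarith)
  · calc √π * (t ^ ω * exp (-t) * (1 - exp (-t))) ≤ √π * (t ^ ω * exp (-t)) := by
          gcongr √π * ?_
          exact mul_le_of_le_one_right (by positivity) (by linarith [exp_pos (-t)])
      _ ≤ √π * (ω ^ ω * exp (-ω)) := by
          gcongr √π * ?_; exact rpow_mul_exp_neg_le (by linarith) ht
      _ ≤ Gamma (ω + 1) := by
          rw [← mul_assoc]
          exact sqrt_pi_mul_rpow_self_mul_exp_neg_le_Gamma_add_one (by linarith)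

theorem betaFn_bound (ω : ℝ) (hω : -1 < ω) (t : ℝ) :
    |betaFn ω t| ≤ 1 / Real.sqrt Real.pi := by
  unfold betaFn
  split_ifs with ht
  · have hΓ : 0 < Gamma (ω + 1) := Gamma_pos_of_pos (by linarith)
    have hexp : 0 < 1 - exp (-t) := sub_pos.mpr (exp_lt_one_iff.mpr (neg_lt_zero.mpr ht))
    rw [abs_of_nonneg (by positivity), div_le_div_iff₀ hΓ (by positivity), one_mul, mul_comm]
    exact sqrt_pi_mul_rpow_mul_exp_neg_mul_one_sub_exp_neg_le_Gamma_add_one hω ht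
  · simp only [abs_zero]
    positivity
end
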